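/- arXiv:2405.08732 — 7 statements merged into one kernel-verified Lean document; each statement's English description precedes it below -/
import Mathlib

section
/- Under cyclic placement, any subset of N_r servers jointly stores all datasets: for every subset S ⊆ {0,…,N−1} with |S| = N_r, the union ⋃_{i∈S} Z_i equals the full dataset index set {0,…,K−1}. -/
/-- The set of dataset indices stored at server `i` under cyclic placement:
`Z_i = { ((i+j) mod N) + r·N : 0 ≤ j ≤ N−N_r, 0 ≤ r ≤ Δ−1 }`. -/
def cyclicZ (N Nr Δ i : ℕ) : Finset ℕ :=
  (Finset.range (N - Nr + 1) ×ˢ Finset.range Δ).image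
    (fun p => (i + p.1) % N + p.2 * N)

/-- Under cyclic placement, any subset of `N_r` servers jointly stores all `K = ΔN` datasets. -/
theorem cyclicZ_union_of_Nr_servers (N Nr Δ : ℕ) (hN : 0 < N) (hΔ : 0 < Δ)
    (hNr1 : 1 ≤ Nr) (hNrN : Nr ≤ N) :
    ∀ S : Finset ℕ, S ⊆ Finset.range N → S.card = Nr →
      S.biUnion (cyclicZ N Nr Δ) = Finset.range (Δ * N) := by
  intro S hS hcard
  apply Finset.Subset.antisymm
  · intro m hm
    simp only [Finset.mem_biUnion, cyclicZ, Finset.mem_image, Finset.mem_product,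
      Finset.mem_range] at hm
    obtain ⟨i, hi, ⟨j, r⟩, ⟨hj, hr⟩, rfl⟩ := hm
    have h1 : (i + j) % N < N := Nat.mod_lt _ hN
    have : r * N + N ≤ Δ * N := by
      calc r * N + N = (r + 1) * N := by ring
      _ ≤ Δ * N := Nat.mul_le_mul_right _ (by omega)
    simp only [Finset.mem_range]
    omega
  · intro m hm
    simp only [Finset.mem_range] at hm
    set k := m % N with hk
    set r := m / N with hr
    have hkN : k < N := Nat.mod_lt _ hN
    have hrΔ : r < Δ := Nat.div_lt_iff_lt_mul hN |>.2 (by omega)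
    -- pigeonhole: find i ∈ S with (k + N - i) % N ≤ N - Nr
    have key : ∃ i ∈ S, (k + N - i) % N ≤ N - Nr := by
      by_contra h
      push_neg at h
      have hinj : Set.InjOn (fun i => (k + N - i) % N) S := by
        intro a ha b hb hab
        have haN : a < N := Finset.mem_range.1 (hS ha)
        have hbN : b < N := Finset.mem_range.1 (hS hb)
        simp only at hab
        have h1 : (k + N - a) % N = (k + N - b) % N := hab
        have h2 : Nat.ModEq N (k + N - a) (k + N - b) := h1
        have h3 : Nat.ModEq N (k + N - a + (a + b)) (k + N - b + (a + b)) :=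
          h2.add_right _
        have e1 : k + N - a + (a + b) = k + N + b := by omega
        have e2 : k + N - b + (a + b) = k + N + a := by omega
        rw [e1, e2] at h3
        have h4 : Nat.ModEq N b a := by
          have := h3.add_left_cancel' (k + N)
          exact this
        have := h4.symm
        unfold Nat.ModEq at this
        rwa [Nat.mod_eq_of_lt haN, Nat.mod_eq_of_lt hbN] at this
      have hmaps : ∀ i ∈ S, (k + N - i) % N ∈ Finset.Ioo (N - Nr) N := by
        intro i hi
        simp only [Finset.mem_Ioo]
        exact ⟨h i hi, Nat.mod_lt _ hN⟩
      have hle := Finset.card_le_card_of_injOn _ hmaps hinj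
      rw [hcard, Nat.card_Ioo] at hle
      omega
    obtain ⟨i, hi, hile⟩ := key
    have hiN : i < N := Finset.mem_range.1 (hS hi)
    simp only [Finset.mem_biUnion, cyclicZ, Finset.mem_image, Finset.mem_product,
      Finset.mem_range]
    refine ⟨i, hi, ⟨(k + N - i) % N, r⟩, ⟨by omega, hrΔ⟩, ?_⟩
    have heq : (i + (k + N - i) % N) % N = k := by
      have e : i + (k + N - i) = k + N := by omega
      calc (i + (k + N - i) % N) % N = (i + (k + N - i)) % N := by
            rw [Nat.add_mod, Nat.mod_mod, ← Nat.add_mod]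
        _ = k := by rw [e, Nat.add_mod_right, Nat.mod_eq_of_lt hkN]
    dsimp only
    rw [heq, hk, hr]
    exact Nat.mod_add_div' m N
end

section
/- Under cyclic placement there exist N* = ⌊N/(N−N_r+1)⌋ servers whose stored dataset sets are pairwise disjoint: with L = N−N_r+1, the servers i_m = m·L for m = 0,…,N*−1 satisfy Z_{i_m} ∩ Z_{i_{m'}} = ∅ for all m ≠ m', the union ⋃_{m} Z_{i_m} has cardinality N*·Δ·L, and the number of dataset indices not covered by this union equals Δ·(N − N*·L). -/
lemma cyclicZ_filter_char (N Nr Δ : ℕ) (hN : 0 < N) (hNr1 : 1 ≤ Nr) (hNrN : Nr ≤ N)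
    (m : ℕ) (hm : m < N / (N - Nr + 1)) :
    cyclicZ N Nr Δ (m * (N - Nr + 1)) =
      (Finset.range (Δ * N)).filter
        (fun x => m * (N - Nr + 1) ≤ x % N ∧
          x % N < m * (N - Nr + 1) + (N - Nr + 1)) := by
  set L := N - Nr + 1 with hLdef
  have hmL : (m + 1) * L ≤ N :=
    le_trans (Nat.mul_le_mul_right L (Nat.succ_le_of_lt hm)) (Nat.div_mul_le_self N L)
  have hmL' : m * L + L ≤ N := by rw [Nat.succ_mul] at hmL; exact hmL
  ext x
  simp only [cyclicZ, Finset.mem_image, Finset.mem_product, Finset.mem_range,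
    Finset.mem_filter]
  constructor
  · rintro ⟨⟨j, r⟩, ⟨hj, hr⟩, rfl⟩
    have h1 : m * L + j < N := by omega
    have hmod : (m * L + j) % N = m * L + j := Nat.mod_eq_of_lt h1
    have hxmod : ((m * L + j) % N + r * N) % N = m * L + j := by
      rw [hmod, Nat.add_mul_mod_self_right, Nat.mod_eq_of_lt h1]
    refine ⟨?_, ?_, ?_⟩
    · rw [hmod]
      calc m * L + j + r * N < N + r * N := by omega
        _ = (r + 1) * N := by ring
        _ ≤ Δ * N := Nat.mul_le_mul_right N hr
    · rw [hxmod]; omega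
    · rw [hxmod]; omega
  · rintro ⟨hxΔ, h1, h2⟩
    refine ⟨⟨x % N - m * L, x / N⟩, ⟨by omega, ?_⟩, ?_⟩
    · exact (Nat.div_lt_iff_lt_mul hN).2 hxΔ
    · have hj : m * L + (x % N - m * L) = x % N := by omega
      have hxN : x % N < N := Nat.mod_lt x hN
      simp only [hj, Nat.mod_eq_of_lt hxN]
      rw [mul_comm, Nat.mod_add_div]

lemma cyclicZ_card (N Nr Δ : ℕ) (hN : 0 < N) (hNr1 : 1 ≤ Nr) (hNrN : Nr ≤ N)
    (m : ℕ) (hm : m < N / (N - Nr + 1)) :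
    (cyclicZ N Nr Δ (m * (N - Nr + 1))).card = Δ * (N - Nr + 1) := by
  set L := N - Nr + 1 with hLdef
  have hmL : (m + 1) * L ≤ N :=
    le_trans (Nat.mul_le_mul_right L (Nat.succ_le_of_lt hm)) (Nat.div_mul_le_self N L)
  have hmL' : m * L + L ≤ N := by rw [Nat.succ_mul] at hmL; exact hmL
  rw [cyclicZ]
  rw [Finset.card_image_of_injOn, Finset.card_product, Finset.card_range,
    Finset.card_range, mul_comm]
  rintro ⟨j, r⟩ hp ⟨j', r'⟩ hq h
  simp only [Finset.mem_coe, Finset.mem_product, Finset.mem_range] at hp hq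
  have h1 : m * L + j < N := by omega
  have h1' : m * L + j' < N := by omega
  simp only [Nat.mod_eq_of_lt h1, Nat.mod_eq_of_lt h1'] at h
  have hmodeq : (m * L + j + r * N) % N = (m * L + j' + r' * N) % N := by rw [h]
  rw [Nat.add_mul_mod_self_right, Nat.add_mul_mod_self_right,
    Nat.mod_eq_of_lt h1, Nat.mod_eq_of_lt h1'] at hmodeq
  have hjj : j = j' := by omega
  subst hjj
  have : r * N = r' * N := by omega
  have : r = r' := Nat.eq_of_mul_eq_mul_right hN this
  subst this
  rfl

/-- Under cyclic placement, with `L = N−N_r+1` and `N* = ⌊N/L⌋`, the `N*` servers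
`i_m = m·L`, `m = 0,…,N*−1`, store pairwise disjoint dataset sets; their union has
cardinality `N*·Δ·L`, and `Δ·(N − N*·L)` dataset indices are left uncovered. -/
theorem cyclicZ_disjoint_servers (N Nr Δ : ℕ) (hN : 0 < N) (hΔ : 0 < Δ)
    (hNr1 : 1 ≤ Nr) (hNrN : Nr ≤ N) :
    (∀ m < N / (N - Nr + 1), ∀ m' < N / (N - Nr + 1), m ≠ m' →
        Disjoint (cyclicZ N Nr Δ (m * (N - Nr + 1))) (cyclicZ N Nr Δ (m' * (N - Nr + 1)))) ∧
    ((Finset.range (N / (N - Nr + 1))).biUnion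
        (fun m => cyclicZ N Nr Δ (m * (N - Nr + 1)))).card
      = (N / (N - Nr + 1)) * Δ * (N - Nr + 1) ∧
    (Finset.range (Δ * N) \
        (Finset.range (N / (N - Nr + 1))).biUnion
          (fun m => cyclicZ N Nr Δ (m * (N - Nr + 1)))).card
      = Δ * (N - (N / (N - Nr + 1)) * (N - Nr + 1)) := by
  set L := N - Nr + 1 with hLdef
  set Ns := N / L with hNsdef
  have hdisj : ∀ m < Ns, ∀ m' < Ns, m ≠ m' →
      Disjoint (cyclicZ N Nr Δ (m * L)) (cyclicZ N Nr Δ (m' * L)) := by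
    intro m hm m' hm' hne
    rw [cyclicZ_filter_char N Nr Δ hN hNr1 hNrN m hm,
      cyclicZ_filter_char N Nr Δ hN hNr1 hNrN m' hm']
    rw [Finset.disjoint_left]
    intro x hx hx'
    simp only [Finset.mem_filter, ← hLdef] at hx hx'
    rcases lt_or_gt_of_ne hne with h | h
    · have : (m + 1) * L ≤ m' * L := Nat.mul_le_mul_right L h
      rw [Nat.succ_mul] at this; omega
    · have : (m' + 1) * L ≤ m * L := Nat.mul_le_mul_right L h
      rw [Nat.succ_mul] at this; omega
  have hsub : (Finset.range Ns).biUnion (fun m => cyclicZ N Nr Δ (m * L))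
      ⊆ Finset.range (Δ * N) := by
    intro x hx
    rcases Finset.mem_biUnion.1 hx with ⟨m, hm, hxm⟩
    rw [cyclicZ_filter_char N Nr Δ hN hNr1 hNrN m (Finset.mem_range.1 hm)] at hxm
    exact (Finset.mem_filter.1 hxm).1
  have hcard : ((Finset.range Ns).biUnion (fun m => cyclicZ N Nr Δ (m * L))).card
      = Ns * Δ * L := by
    rw [Finset.card_biUnion (fun m hm m' hm' hne =>
      hdisj m (Finset.mem_range.1 hm) m' (Finset.mem_range.1 hm') hne)]
    rw [Finset.sum_congr rfl (fun m hm =>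
      cyclicZ_card N Nr Δ hN hNr1 hNrN m (Finset.mem_range.1 hm))]
    rw [Finset.sum_const, Finset.card_range, smul_eq_mul, mul_assoc]
  refine ⟨hdisj, hcard, ?_⟩
  rw [Finset.card_sdiff_of_subset hsub, hcard, Finset.card_range]
  have ht : Ns * L ≤ N := Nat.div_mul_le_self N L
  have key : Δ * N = Δ * (N - Ns * L) + Δ * (Ns * L) := by
    rw [← Nat.mul_add, Nat.sub_add_cancel ht]
  have e : Ns * Δ * L = Δ * (Ns * L) := by ring
  rw [e]
  exact Nat.sub_eq_of_eq_add key
end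

section
/- For every ε ∈ [0,1], the binary entropy satisfies h(2ε(1−ε)) ≥ h(ε). -/
open Real

/-- For every `ε ∈ [0,1]`, the binary entropy satisfies `h(2ε(1−ε)) ≥ h(ε)`. -/
theorem binEntropy_two_eps_one_sub_eps_ge (ε : ℝ) (hε : ε ∈ Set.Icc (0 : ℝ) 1) :
    binEntropy (2 * ε * (1 - ε)) ≥ binEntropy ε := by
  obtain ⟨h0, h1⟩ := hε
  -- reduce to ε ≤ 1/2
  suffices H : ∀ x : ℝ, 0 ≤ x → x ≤ 2⁻¹ → binEntropy x ≤ binEntropy (2 * x * (1 - x)) by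
    rcases le_or_gt ε 2⁻¹ with h | h
    · exact H ε h0 h
    · have := H (1 - ε) (by linarith) (by linarith)
      calc binEntropy ε = binEntropy (1 - ε) := (binEntropy_one_sub ε).symm
        _ ≤ binEntropy (2 * (1 - ε) * (1 - (1 - ε))) := this
        _ = binEntropy (2 * ε * (1 - ε)) := by ring_nf
  intro x hx0 hx
  rcases eq_or_lt_of_le hx0 with rfl | hx0
  · simp
  have key : x ≤ 2 * x * (1 - x) := by nlinarith
  have h2 : 2 * x * (1 - x) ≤ 2⁻¹ := by nlinarith
  exact binEntropy_strictMonoOn.monotoneOn ⟨hx0.le, hx⟩ ⟨by nlinarith, h2⟩ key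
end

section
/- For every ε ∈ (0,1), the gain η(ε) = (h(ε) + h(2ε(1−ε)))/(2h(ε)) of the characteristic-graph scheme over the linearly separable scheme satisfies η(ε) ≥ 1, with equality if and only if ε = 1/2; in particular η(ε) > 1 for all ε ∈ (0,1) with ε ≠ 1/2. -/
open Real

lemma bin_key (ε : ℝ) (h0 : 0 < ε) (h1 : ε < 1) (hεle : ε ≤ 1/2) :
    binEntropy ε ≤ binEntropy (2 * ε * (1 - ε)) ∧
      (ε < 1/2 → binEntropy ε < binEntropy (2 * ε * (1 - ε))) := by
  have hm : ε ∈ Set.Icc (0:ℝ) 2⁻¹ := ⟨h0.le, by linarith⟩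
  have hm2 : 2 * ε * (1 - ε) ∈ Set.Icc (0:ℝ) 2⁻¹ := by
    constructor <;> nlinarith
  constructor
  · exact binEntropy_strictMonoOn.monotoneOn hm hm2 (by nlinarith)
  · intro hlt
    exact binEntropy_strictMonoOn hm hm2 (by nlinarith)

lemma bin_key' (ε : ℝ) (h0 : 0 < ε) (h1 : ε < 1) :
    binEntropy ε ≤ binEntropy (2 * ε * (1 - ε)) ∧
      (ε ≠ 1/2 → binEntropy ε < binEntropy (2 * ε * (1 - ε))) := by
  rcases le_or_gt ε (1/2) with h | h
  · obtain ⟨a, b⟩ := bin_key ε h0 h1 h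
    exact ⟨a, fun hne => b (lt_of_le_of_ne h hne)⟩
  · have := bin_key (1 - ε) (by linarith) (by linarith) (by linarith)
    have heq : 2 * (1 - ε) * (1 - (1 - ε)) = 2 * ε * (1 - ε) := by ring
    rw [heq, binEntropy_one_sub] at this
    exact ⟨this.1, fun _ => this.2 (by linarith)⟩

/-- For `ε ∈ (0,1)`, the gain `η(ε) = (h(ε) + h(2ε(1−ε)))/(2h(ε))` of the
characteristic-graph scheme over the linearly separable scheme satisfies `η(ε) ≥ 1`,
with equality iff `ε = 1/2`; in particular `η(ε) > 1` for `ε ≠ 1/2`. -/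
theorem gain_ge_one_iff (ε : ℝ) (hε : ε ∈ Set.Ioo (0 : ℝ) 1) :
    (binEntropy ε + binEntropy (2 * ε * (1 - ε))) / (2 * binEntropy ε) ≥ 1 ∧
    ((binEntropy ε + binEntropy (2 * ε * (1 - ε))) / (2 * binEntropy ε) = 1 ↔ ε = 1 / 2) ∧
    (ε ≠ 1 / 2 →
      (binEntropy ε + binEntropy (2 * ε * (1 - ε))) / (2 * binEntropy ε) > 1) := by
  obtain ⟨h0, h1⟩ := hε
  obtain ⟨hle, hlt⟩ := bin_key' ε h0 h1
  have hpos : 0 < binEntropy ε := binEntropy_pos h0 h1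
  have hgt : ∀ hne : ε ≠ 1/2,
      (binEntropy ε + binEntropy (2 * ε * (1 - ε))) / (2 * binEntropy ε) > 1 := by
    intro hne
    rw [gt_iff_lt, lt_div_iff₀ (by linarith)]
    nlinarith [hlt hne]
  have hge : (binEntropy ε + binEntropy (2 * ε * (1 - ε))) / (2 * binEntropy ε) ≥ 1 := by
    rw [ge_iff_le, le_div_iff₀ (by linarith)]; linarith
  refine ⟨hge, ⟨fun heq => ?_, fun heq => ?_⟩, hgt⟩
  · by_contra hne
    exact absurd heq (ne_of_gt (hgt hne))
  · subst heq
    have : 2 * (1/2 : ℝ) * (1 - 1/2) = 1/2 := by norm_num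
    rw [this, div_eq_one_iff_eq (by positivity)]; ring
end

section
/- The gain η(ε) = (h(ε) + h(2ε(1−ε)))/(2h(ε)) tends to 3/2 as ε tends to 0 from the right, and also tends to 3/2 as ε tends to 1 from the left. -/
/-!
Near `0` the binary entropy is asymptotic to `-ε log ε`: the second term
`-(1 - ε) log (1 - ε)` is `O(ε)`, negligible against `ε |log ε|`. Since
`log (2ε(1 - ε)) = log ε + O(1)`, this gives `h(2ε(1 - ε)) ~ 2ε |log ε| ~ 2 h(ε)`,
hence `η(ε) → (1 + 2) / 2`. The limit at `1` follows from `η(1 - ε) = η(ε)`.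
-/

open Real Filter Topology Asymptotics

lemma isLittleO_one_log_nhdsGT_zero : (fun _ ↦ (1 : ℝ)) =o[𝓝[>] 0] log :=
  (isLittleO_one_left_iff ℝ).2 <| tendsto_abs_atBot_atTop.comp tendsto_log_nhdsGT_zero

lemma isLittleO_self_negMulLog_nhdsGT_zero : (fun x : ℝ ↦ x) =o[𝓝[>] 0] negMulLog :=
  ((isBigO_refl (fun x : ℝ ↦ x) _).mul_isLittleO isLittleO_one_log_nhdsGT_zero.neg_right).congr
    (fun x ↦ mul_one x) (fun x ↦ by simp [negMulLog])

lemma binEntropy_isEquivalent_negMulLog : binEntropy ~[𝓝[>] 0] negMulLog := by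
  have hderiv : HasDerivAt (fun x ↦ negMulLog (1 - x)) 1 0 := by
    simpa using (hasDerivAt_negMulLog (x := 1 - 0) (by norm_num)).comp_const_sub 1 0
  have hsmall : (fun x ↦ negMulLog (1 - x)) =o[𝓝[>] 0] negMulLog := by
    simpa using (hderiv.isBigO_sub.mono nhdsWithin_le_nhds).trans_isLittleO
      (by simpa using isLittleO_self_negMulLog_nhdsGT_zero)
  rw [binEntropy_eq_negMulLog_add_negMulLog_one_sub']
  exact IsEquivalent.refl.add_isLittleO hsmall

lemma negMulLog_mul_one_sub_isEquivalent {c : ℝ} (hc : 0 < c) :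
    (fun x ↦ negMulLog (c * x * (1 - x))) ~[𝓝[>] 0] fun x ↦ c * negMulLog x := by
  have hconst : (fun x : ℝ ↦ c * (1 - x)) ~[𝓝[>] 0] fun _ ↦ c := by
    refine (isEquivalent_const_iff_tendsto hc.ne').2 ?_
    have hcont : Continuous fun x : ℝ ↦ c * (1 - x) := by fun_prop
    simpa using (hcont.tendsto 0).mono_left nhdsWithin_le_nhds
  have hlog : (fun x ↦ log x + (log c + log (1 - x))) ~[𝓝[>] 0] log := by
    have hbdd :
        Tendsto (fun x : ℝ ↦ log c + log (1 - x)) (𝓝 0) (𝓝 (log c + log (1 - 0))) :=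
      tendsto_const_nhds.add ((tendsto_const_nhds.sub tendsto_id).log (by norm_num))
    exact IsEquivalent.refl.add_isLittleO <| ((hbdd.mono_left nhdsWithin_le_nhds).isBigO_one ℝ)
      |>.trans_isLittleO isLittleO_one_log_nhdsGT_zero
  have hprod : (fun x ↦ c * (1 - x) * (x * -(log x + (log c + log (1 - x)))))
      ~[𝓝[>] 0] fun x ↦ c * (x * -log x) :=
    hconst.mul ((IsEquivalent.refl (u := fun x ↦ x)).mul hlog.neg)
  have hrhs : (fun x ↦ c * (x * -log x)) = fun x ↦ c * negMulLog x := by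
    simp only [negMulLog, neg_mul, mul_neg]
  refine (hrhs ▸ hprod).congr_left ?_
  filter_upwards [Ioo_mem_nhdsGT (zero_lt_one' ℝ)] with x ⟨hx₀, hx₁⟩
  rw [negMulLog, log_mul (mul_pos hc hx₀).ne' (sub_pos.2 hx₁).ne', log_mul hc.ne' hx₀.ne']
  ring

lemma tendsto_mul_mul_one_sub_nhdsGT_zero {c : ℝ} (hc : 0 < c) :
    Tendsto (fun x : ℝ ↦ c * x * (1 - x)) (𝓝[>] 0) (𝓝[>] 0) := by
  refine tendsto_nhdsWithin_iff.2 ⟨?_, ?_⟩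
  · have hcont : Continuous fun x : ℝ ↦ c * x * (1 - x) := by fun_prop
    simpa using (hcont.tendsto 0).mono_left nhdsWithin_le_nhds
  · filter_upwards [Ioo_mem_nhdsGT (zero_lt_one' ℝ)] with x ⟨hx₀, hx₁⟩
    exact mul_pos (mul_pos hc hx₀) (sub_pos.2 hx₁)

lemma binEntropy_mul_one_sub_isEquivalent {c : ℝ} (hc : 0 < c) :
    (fun x ↦ binEntropy (c * x * (1 - x))) ~[𝓝[>] 0] fun x ↦ c * binEntropy x := by
  have hu := tendsto_mul_mul_one_sub_nhdsGT_zero hc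
  exact (binEntropy_isEquivalent_negMulLog.comp_tendsto hu).trans <|
    (negMulLog_mul_one_sub_isEquivalent hc).trans <|
      (IsEquivalent.refl (u := fun _ ↦ c)).mul binEntropy_isEquivalent_negMulLog.symm

lemma tendsto_one_sub_nhdsLT_one : Tendsto (fun x : ℝ ↦ 1 - x) (𝓝[<] 1) (𝓝[>] 0) := by
  simpa using (continuous_sub_left (1 : ℝ)).continuousWithinAt.tendsto_nhdsWithin
    (x := 1) (s := Set.Iio 1) (t := Set.Ioi 0) (fun x (hx : x < 1) ↦ sub_pos.2 hx)

noncomputable def gain (ε : ℝ) : ℝ :=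
  (binEntropy ε + binEntropy (2 * ε * (1 - ε))) / (2 * binEntropy ε)

lemma gain_one_sub (ε : ℝ) : gain (1 - ε) = gain ε := by
  rw [gain, gain, binEntropy_one_sub, (by ring : 2 * (1 - ε) * (1 - (1 - ε)) = 2 * ε * (1 - ε))]

lemma tendsto_gain_nhdsGT_zero : Tendsto gain (𝓝[>] 0) (𝓝 (3 / 2)) := by
  have hpos : ∀ᶠ ε in 𝓝[>] 0, 0 < binEntropy ε := by
    filter_upwards [Ioo_mem_nhdsGT (zero_lt_one' ℝ)] with ε ⟨hε₀, hε₁⟩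
    exact binEntropy_pos hε₀ hε₁
  have hratio : Tendsto (fun ε ↦ binEntropy (2 * ε * (1 - ε)) / (2 * binEntropy ε))
      (𝓝[>] 0) (𝓝 1) :=
    (isEquivalent_iff_tendsto_one (hpos.mono fun ε hε ↦ by positivity)).1
      (binEntropy_mul_one_sub_isEquivalent two_pos)
  have hsum := (tendsto_const_nhds (x := (1 / 2 : ℝ))).add hratio
  rw [show (1 / 2 : ℝ) + 1 = 3 / 2 by norm_num] at hsum
  refine hsum.congr' ?_
  filter_upwards [hpos] with ε hε
  rw [gain]
  field_simp

/-- The gain `η(ε) = (h(ε) + h(2ε(1−ε)))/(2h(ε))` tends to `3/2` as `ε → 0⁺`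
and as `ε → 1⁻`. -/
theorem gain_tendsto_three_halves :
    Tendsto (fun ε : ℝ => (binEntropy ε + binEntropy (2 * ε * (1 - ε))) / (2 * binEntropy ε))
      (nhdsWithin 0 (Set.Ioi 0)) (nhds (3 / 2)) ∧
    Tendsto (fun ε : ℝ => (binEntropy ε + binEntropy (2 * ε * (1 - ε))) / (2 * binEntropy ε))
      (nhdsWithin 1 (Set.Iio 1)) (nhds (3 / 2)) :=
  ⟨tendsto_gain_nhdsGT_zero,
    (tendsto_gain_nhdsGT_zero.comp tendsto_one_sub_nhdsLT_one).congr fun ε ↦ gain_one_sub ε⟩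
end

section
/- For every positive integer M and every ε ∈ [0,1], the binary entropy of the parity probability of M i.i.d. Bernoulli(ε) variables is at most M times the binary entropy of ε: h((1 − (1−2ε)^M)/2) ≤ M·h(ε). -/
open Real

lemma negMulLog_add_le (x y : ℝ) (hx : 0 ≤ x) (hy : 0 ≤ y) :
    negMulLog (x + y) ≤ negMulLog x + negMulLog y := by
  rcases hx.eq_or_lt with h | hx
  · simp [← h]
  rcases hy.eq_or_lt with h | hy
  · simp [← h]
  unfold Real.negMulLog
  have h1 : Real.log x ≤ Real.log (x + y) := Real.log_le_log hx (by linarith)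
  have h2 : Real.log y ≤ Real.log (x + y) := Real.log_le_log hy (by linarith)
  nlinarith

lemma binEntropy_xor_le (a b : ℝ) (ha : a ∈ Set.Icc (0:ℝ) 1) (hb : b ∈ Set.Icc (0:ℝ) 1) :
    binEntropy (a * (1 - b) + (1 - a) * b) ≤ binEntropy a + binEntropy b := by
  obtain ⟨ha0, ha1⟩ := ha
  obtain ⟨hb0, hb1⟩ := hb
  have key : 1 - (a * (1 - b) + (1 - a) * b) = a * b + (1 - a) * (1 - b) := by ring
  rw [binEntropy_eq_negMulLog_add_negMulLog_one_sub, key,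
    binEntropy_eq_negMulLog_add_negMulLog_one_sub a,
    binEntropy_eq_negMulLog_add_negMulLog_one_sub b]
  have h1 := negMulLog_add_le (a * (1 - b)) ((1 - a) * b)
    (by nlinarith) (by nlinarith)
  have h2 := negMulLog_add_le (a * b) ((1 - a) * (1 - b))
    (by nlinarith) (by nlinarith)
  have e1 := Real.negMulLog_mul a (1 - b)
  have e2 := Real.negMulLog_mul (1 - a) b
  have e3 := Real.negMulLog_mul a b
  have e4 := Real.negMulLog_mul (1 - a) (1 - b)
  nlinarith

/-- For every positive integer `M` and every `ε ∈ [0,1]`, the binary entropy of the parity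
probability `ε_M = (1 − (1−2ε)^M)/2` of `M` i.i.d. Bernoulli(ε) variables is at most
`M·h(ε)`. -/
theorem binEntropy_parity_le (M : ℕ) (hM : 0 < M) (ε : ℝ) (hε : ε ∈ Set.Icc (0 : ℝ) 1) :
    binEntropy ((1 - (1 - 2 * ε) ^ M) / 2) ≤ M * binEntropy ε := by
  obtain ⟨hε0, hε1⟩ := hε
  induction M with
  | zero => omega
  | succ n ih =>
    rcases Nat.eq_zero_or_pos n with hn | hn
    · subst hn
      norm_num only [pow_one]
      have : (1 - (1 - 2 * ε)) / 2 = ε := by ring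
      rw [this]
      simp
    · have ihn := ih hn
      set t := (1 - (1 - 2 * ε) ^ n) / 2 with ht
      have habs : |(1 - 2 * ε) ^ n| ≤ 1 := by
        rw [abs_pow]
        exact pow_le_one₀ (abs_nonneg _) (abs_le.2 ⟨by linarith, by linarith⟩)
      rw [abs_le] at habs
      have ht0 : (0:ℝ) ≤ t := by rw [ht]; linarith [habs.2]
      have ht1 : t ≤ 1 := by rw [ht]; linarith [habs.1]
      have hq : (1 - (1 - 2 * ε) ^ (n + 1)) / 2 = t * (1 - ε) + (1 - t) * ε := by
        rw [ht]; ring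
      rw [hq]
      calc binEntropy (t * (1 - ε) + (1 - t) * ε)
          ≤ binEntropy t + binEntropy ε :=
            binEntropy_xor_le t ε ⟨ht0, ht1⟩ ⟨hε0, hε1⟩
        _ ≤ n * binEntropy ε + binEntropy ε := by linarith
        _ = (n + 1 : ℕ) * binEntropy ε := by push_cast; ring
end

section
/- The entropy of the sum of two i.i.d. Bernoulli(ε) variables (over the integers) is at least (3/2) times the binary entropy of ε: for every ε ∈ [0,1], negMulLog((1−ε)²) + negMulLog(2ε(1−ε)) + negMulLog(ε²) ≥ (3/2)·h(ε). Consequently the gain η = (h(ε) + H(f_2))/(2h(ε)) for computing f_1 = W_2 and f_2 = W_2 + W_3 from uncorrelated Bernoulli(ε) subfunctions is lower bounded by 1.25 for ε ∈ (0,1). -/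
/-!
Expanding the squares and the product inside the logarithms gives
`H(f₂) = 2 h(ε) - 2 log 2 · ε(1 - ε)`, so the claim is `4 log 2 · ε(1 - ε) ≤ h(ε)`.
With `ε = (1 - t)/2` this reads `(1 + t) log(1 + t) + (1 - t) log(1 - t) ≤ 2 log 2 · t²`.
The left side is `∑ t^(2k+2) / ((k+1)(2k+1))`, so its quotient by `t²` increases with `|t|`
and tends to its value `2 log 2` at `t = 1`.
-/

open Real Filter Topology

lemma hasSum_mul_log_one_add_add_mul_log_one_sub {t : ℝ} (ht : |t| < 1) :
    HasSum (fun k : ℕ => t ^ (2 * k + 2) / ((k + 1) * (2 * k + 1)))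
      ((1 + t) * log (1 + t) + (1 - t) * log (1 - t)) := by
  obtain ⟨ht₀, ht₁⟩ := abs_lt.1 ht
  have hsq : |t ^ 2| < 1 := by rwa [abs_pow, sq_lt_one_iff_abs_lt_one, abs_abs]
  have hlog : log (1 - t ^ 2) = log (1 + t) + log (1 - t) := by
    rw [← log_mul (by linarith) (by linarith)]; ring_nf
  have hsum := ((hasSum_log_sub_log_of_abs_lt_one ht).mul_left t).add
    (hasSum_pow_div_log_of_abs_lt_one hsq).neg
  rw [neg_neg, hlog] at hsum
  rw [show (1 + t) * log (1 + t) + (1 - t) * log (1 - t)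
      = t * (log (1 + t) - log (1 - t)) + (log (1 + t) + log (1 - t)) by ring]
  exact hsum.congr_fun fun k => by field_simp; ring

lemma mul_log_one_add_add_mul_log_one_sub_le {t : ℝ} (ht : |t| < 1) :
    (1 + t) * log (1 + t) + (1 - t) * log (1 - t) ≤ 2 * log 2 * t ^ 2 := by
  set G : ℝ → ℝ := fun s => (1 + s) * log (1 + s) + (1 - s) * log (1 - s)
  have hG1 : G 1 = 2 * log 2 := by norm_num [G]
  have hmono : ∀ s ∈ Set.Ioo |t| 1, G t * s ^ 2 ≤ G s * t ^ 2 := by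
    intro s ⟨hts, hs1⟩
    have hs : 0 < s := (abs_nonneg t).trans_lt hts
    have hsq : t ^ 2 ≤ s ^ 2 := sq_le_sq.2 (by rw [abs_of_pos hs]; exact hts.le)
    refine hasSum_le (fun k => ?_)
      ((hasSum_mul_log_one_add_add_mul_log_one_sub ht).mul_right _)
      ((hasSum_mul_log_one_add_add_mul_log_one_sub (by rwa [abs_of_pos hs])).mul_right _)
    rw [div_mul_eq_mul_div, div_mul_eq_mul_div]
    refine div_le_div_of_nonneg_right ?_ (by positivity)
    calc t ^ (2 * k + 2) * s ^ 2 = (t ^ 2) ^ k * (t ^ 2 * s ^ 2) := by ring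
      _ ≤ (s ^ 2) ^ k * (t ^ 2 * s ^ 2) := by gcongr
      _ = s ^ (2 * k + 2) * t ^ 2 := by ring
  have hlim_left : Tendsto (fun s => G t * s ^ 2) (𝓝[<] 1) (𝓝 (G t)) := by
    simpa using ((by fun_prop : Continuous fun s : ℝ => G t * s ^ 2).tendsto 1).mono_left
      nhdsWithin_le_nhds
  have hlim_right : Tendsto (fun s => G s * t ^ 2) (𝓝[<] 1) (𝓝 (2 * log 2 * t ^ 2)) := by
    rw [← hG1]
    exact ((by fun_prop : Continuous fun s => G s * t ^ 2).tendsto 1).mono_left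
      nhdsWithin_le_nhds
  exact le_of_tendsto_of_tendsto hlim_left hlim_right
    (Filter.mem_of_superset (Ioo_mem_nhdsLT ht) hmono)

lemma binEntropy_one_sub_div_two (t : ℝ) :
    binEntropy ((1 - t) / 2) = log 2 - ((1 + t) * log (1 + t) + (1 - t) * log (1 - t)) / 2 := by
  rw [binEntropy_eq_negMulLog_add_negMulLog_one_sub,
    show 1 - (1 - t) / 2 = (1 + t) * 2⁻¹ by ring, div_eq_mul_inv, negMulLog_mul, negMulLog_mul]
  simp only [negMulLog, log_inv]
  ring

lemma negMulLog_sq (x : ℝ) : negMulLog (x ^ 2) = 2 * x * negMulLog x := by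
  rw [sq, negMulLog_mul]; ring

lemma negMulLog_binomial_two_eq (ε : ℝ) :
    negMulLog ((1 - ε) ^ 2) + negMulLog (2 * ε * (1 - ε)) + negMulLog (ε ^ 2)
      = 2 * binEntropy ε - 2 * log 2 * (ε * (1 - ε)) := by
  rw [negMulLog_sq, negMulLog_sq, negMulLog_mul, negMulLog_mul,
    binEntropy_eq_negMulLog_add_negMulLog_one_sub]
  simp only [negMulLog]
  ring

lemma four_mul_log_two_mul_le_binEntropy {p : ℝ} (hp₀ : 0 ≤ p) (hp₁ : p ≤ 1) :
    4 * log 2 * (p * (1 - p)) ≤ binEntropy p := by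
  rcases hp₀.eq_or_lt with rfl | hp₀
  · simp
  rcases hp₁.eq_or_lt with rfl | hp₁
  · simp
  have ht : |1 - 2 * p| < 1 := abs_lt.2 ⟨by linarith, by linarith⟩
  have h := binEntropy_one_sub_div_two (1 - 2 * p)
  rw [show (1 - (1 - 2 * p)) / 2 = p by ring] at h
  linarith [mul_log_one_add_add_mul_log_one_sub_le ht]

lemma three_halves_mul_binEntropy_le_negMulLog_binomial_two {ε : ℝ}
    (h₀ : 0 ≤ ε) (h₁ : ε ≤ 1) :
    3 / 2 * binEntropy ε
      ≤ negMulLog ((1 - ε) ^ 2) + negMulLog (2 * ε * (1 - ε)) + negMulLog (ε ^ 2) := by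
  rw [negMulLog_binomial_two_eq]
  linarith [four_mul_log_two_mul_le_binEntropy h₀ h₁]

/-- The entropy of the integer sum of two i.i.d. Bernoulli(ε) variables is at least
`(3/2)·h(ε)`; consequently the gain `η = (h(ε) + H(f_2))/(2h(ε))` is lower bounded by
`1.25` for `ε ∈ (0,1)`. -/
theorem entropy_sum_two_bernoulli_ge :
    (∀ ε ∈ Set.Icc (0 : ℝ) 1,
      negMulLog ((1 - ε) ^ 2) + negMulLog (2 * ε * (1 - ε)) + negMulLog (ε ^ 2)
        ≥ (3 / 2) * binEntropy ε) ∧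
    (∀ ε ∈ Set.Ioo (0 : ℝ) 1,
      (binEntropy ε +
          (negMulLog ((1 - ε) ^ 2) + negMulLog (2 * ε * (1 - ε)) + negMulLog (ε ^ 2)))
        / (2 * binEntropy ε) ≥ 1.25) := by
  constructor
  · exact fun ε ⟨h₀, h₁⟩ => three_halves_mul_binEntropy_le_negMulLog_binomial_two h₀ h₁
  · rintro ε ⟨h₀, h₁⟩
    rw [ge_iff_le, le_div_iff₀ (by linarith [binEntropy_pos h₀ h₁])]
    linarith [three_halves_mul_binEntropy_le_negMulLog_binomial_two h₀.le h₁.le]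
end
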